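/- arXiv:1211.2367 — 3 statements merged into one kernel-verified Lean document; each statement's English description precedes it below -/
import Mathlib

section
/- Let w be a weighted graph on a finite vertex type V and let I ⊆ V be an independent set in w. Define a weighted graph w' supported on V' = V ∖ I by: for distinct u, v ∈ V', w' u v = min( w u v , inf over x ∈ I of (w u x + w x v) ), and w' u v = ⊤ whenever u ∈ I or v ∈ I. Then for all u, v ∈ V', dist_{w'}(u,v) = dist_w(u,v). -/
namespace ISLabel

variable {V : Type*}

/-- Two vertices are adjacent in the weighted graph `w` when they are distinct and
joined by an edge of finite weight. -/
def Adj (w : V → V → ℕ∞) (u v : V) : Prop := u ≠ v ∧ w u v < ⊤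

/-- `p` is a walk from `u` to `v` in the weighted graph `w`: a nonempty list of
vertices starting at `u`, ending at `v`, with consecutive vertices adjacent. -/
def IsWalk (w : V → V → ℕ∞) (u v : V) (p : List V) : Prop :=
  p ≠ [] ∧ p.head? = some u ∧ p.getLast? = some v ∧ p.Chain' (Adj w)

/-- The length of a list of vertices: the sum of `f` over consecutive pairs. -/
def pathLen (f : V → V → ℕ∞) (p : List V) : ℕ∞ :=
  ((p.zip p.tail).map fun e => f e.1 e.2).sum

/-- The distance from `u` to `v` in `w`: the infimum of the lengths of all walks
from `u` to `v` (`⊤` if there is no such walk). -/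
noncomputable def wdist (w : V → V → ℕ∞) (u v : V) : ℕ∞ :=
  ⨅ p : {p : List V // IsWalk w u v p}, pathLen w p.1

/-- `I` is an independent set in `w`. -/
def IsIndep (w : V → V → ℕ∞) (I : Set V) : Prop :=
  ∀ u ∈ I, ∀ v ∈ I, ¬ Adj w u v

/-- `w` is a weighted undirected graph: symmetric, and every off-diagonal value is
either `⊤` (no edge) or a weight `≥ 1`. -/
def IsWGraph (w : V → V → ℕ∞) : Prop :=
  (∀ u v, w u v = w v u) ∧ ∀ u v, u ≠ v → 1 ≤ w u v

/-- `w` is supported on `S`: all weights touching a vertex outside `S` are `⊤`. -/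
def SupportedOn (w : V → V → ℕ∞) (S : Set V) : Prop :=
  ∀ u v, u ∉ S ∨ v ∉ S → w u v = ⊤

/-! Every edge `u b` of `w'` is realized in `w` by a walk of length at most `w' u b`: the edge
itself or a detour `u x b` through `I`. Hence, by the triangle inequality, `dist_w ≤ dist_{w'}`.
Conversely, because `I` is independent, a walk of `w` between vertices outside `I` meets `I` only
in isolated interior vertices, and each visit `u x c` with `x ∈ I` is dominated by the augmented
edge `u c`, so `dist_{w'} ≤ dist_w`. -/

section Walks

variable {w : V → V → ℕ∞}

lemma isWalk_singleton {u v a : V} : IsWalk w u v [a] ↔ u = a ∧ v = a := by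
  constructor
  · rintro ⟨-, hu, hv, -⟩
    simp_all [eq_comm]
  · rintro ⟨rfl, rfl⟩
    exact ⟨List.cons_ne_nil _ _, rfl, rfl, List.isChain_singleton _⟩

lemma isWalk_cons_cons {u v a b : V} {l : List V} :
    IsWalk w u v (a :: b :: l) ↔ u = a ∧ Adj w a b ∧ IsWalk w b v (b :: l) := by
  constructor
  · rintro ⟨-, hu, hv, hchain⟩
    obtain ⟨hab, hbl⟩ := List.isChain_cons_cons.1 hchain
    exact ⟨by simpa [eq_comm] using hu, hab, List.cons_ne_nil _ _, rfl, by simpa using hv, hbl⟩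
  · rintro ⟨rfl, hab, -, -, hv, hbl⟩
    exact ⟨List.cons_ne_nil _ _, rfl, by simpa using hv, List.isChain_cons_cons.2 ⟨hab, hbl⟩⟩

lemma IsWalk.exists_eq_cons {u v : V} {p : List V} (hp : IsWalk w u v p) : ∃ l, p = u :: l := by
  obtain ⟨hne, hhead, -, -⟩ := hp
  obtain ⟨a, l, rfl⟩ := List.exists_cons_of_ne_nil hne
  exact ⟨l, by simpa using hhead⟩

@[simp]
lemma pathLen_singleton (f : V → V → ℕ∞) (a : V) : pathLen f [a] = 0 := by
  simp [pathLen]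

@[simp]
lemma pathLen_cons_cons (f : V → V → ℕ∞) (a b : V) (l : List V) :
    pathLen f (a :: b :: l) = f a b + pathLen f (b :: l) := by
  simp [pathLen]

lemma IsWalk.append_tail {u v x : V} {p q : List V} (hp : IsWalk w u v p) (hq : IsWalk w v x q) :
    IsWalk w u x (p ++ q.tail) ∧ pathLen w (p ++ q.tail) = pathLen w p + pathLen w q := by
  induction p generalizing u with
  | nil => exact absurd rfl hp.1
  | cons a l ih =>
    cases l with
    | nil =>
      obtain ⟨rfl, rfl⟩ := isWalk_singleton.1 hp
      obtain ⟨l, rfl⟩ := hq.exists_eq_cons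
      simpa using hq
    | cons b l =>
      obtain ⟨rfl, hab, hbl⟩ := isWalk_cons_cons.1 hp
      obtain ⟨hwalk, hlen⟩ := ih hbl
      refine ⟨isWalk_cons_cons.2 ⟨rfl, hab, hwalk⟩, ?_⟩
      simp only [List.cons_append, pathLen_cons_cons] at hlen ⊢
      rw [hlen, add_assoc]

lemma wdist_le_pathLen {u v : V} {p : List V} (hp : IsWalk w u v p) : wdist w u v ≤ pathLen w p :=
  iInf_le (fun p : {p // IsWalk w u v p} => pathLen w p.1) ⟨p, hp⟩

@[simp]
lemma wdist_self (v : V) : wdist w v v = 0 :=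
  nonpos_iff_eq_zero.1 <| by simpa using wdist_le_pathLen (isWalk_singleton.2 ⟨rfl, rfl⟩)

lemma wdist_le_apply (u v : V) : wdist w u v ≤ w u v := by
  by_cases huv : u = v
  · simp [huv]
  by_cases htop : w u v = ⊤
  · simp [htop]
  have hwalk : IsWalk w u v [u, v] :=
    isWalk_cons_cons.2 ⟨rfl, ⟨huv, lt_top_iff_ne_top.2 htop⟩, isWalk_singleton.2 ⟨rfl, rfl⟩⟩
  simpa using wdist_le_pathLen hwalk

lemma wdist_triangle (u v x : V) : wdist w u x ≤ wdist w u v + wdist w v x :=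
  ENat.le_iInf_add_iInf fun p q => by
    rw [← (p.2.append_tail q.2).2]
    exact wdist_le_pathLen (p.2.append_tail q.2).1

lemma wdist_le_wdist_of_forall_adj {w' : V → V → ℕ∞}
    (h : ∀ a b, Adj w' a b → wdist w a b ≤ w' a b) (u v : V) : wdist w u v ≤ wdist w' u v := by
  suffices ∀ q u, IsWalk w' u v q → wdist w u v ≤ pathLen w' q from
    le_iInf fun q => this q.1 u q.2
  intro q
  induction q with
  | nil => exact fun _ hq => absurd rfl hq.1
  | cons a l ih =>
    intro u hq
    cases l with
    | nil =>
      obtain ⟨rfl, rfl⟩ := isWalk_singleton.1 hq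
      simp
    | cons b l =>
      obtain ⟨rfl, hab, hbl⟩ := isWalk_cons_cons.1 hq
      calc wdist w u v ≤ wdist w u b + wdist w b v := wdist_triangle u b v
        _ ≤ w' u b + pathLen w' (b :: l) := add_le_add (h u b hab) (ih b hbl)
        _ = pathLen w' (u :: b :: l) := (pathLen_cons_cons _ _ _ _).symm

end Walks

section Augmentation

variable {w w' : V → V → ℕ∞} {I : Set V}

lemma wdist_augment_le_min
    (hw'1 : ∀ u v, u ≠ v → u ∉ I → v ∉ I →
      w' u v = min (w u v) (⨅ x ∈ I, w u x + w x v))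
    {u c : V} (hu : u ∉ I) (hc : c ∉ I) :
    wdist w' u c ≤ min (w u c) (⨅ x ∈ I, w u x + w x c) := by
  by_cases huc : u = c
  · simp [huc]
  · exact hw'1 u c huc hu hc ▸ wdist_le_apply u c

lemma wdist_le_augment_of_adj
    (hw'1 : ∀ u v, u ≠ v → u ∉ I → v ∉ I →
      w' u v = min (w u v) (⨅ x ∈ I, w u x + w x v))
    (hw'2 : ∀ u v, u ∈ I ∨ v ∈ I → w' u v = ⊤) {a b : V} (hab : Adj w' a b) :
    wdist w a b ≤ w' a b := by
  obtain ⟨hne, hlt⟩ := hab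
  have ha : a ∉ I := fun ha => hlt.ne (hw'2 a b (.inl ha))
  have hb : b ∉ I := fun hb => hlt.ne (hw'2 a b (.inr hb))
  rw [hw'1 a b hne ha hb]
  refine le_min (wdist_le_apply a b) (le_iInf₂ fun x _ => ?_)
  calc wdist w a b ≤ wdist w a x + wdist w x b := wdist_triangle a x b
    _ ≤ w a x + w x b := add_le_add (wdist_le_apply a x) (wdist_le_apply x b)

lemma wdist_augment_le_pathLen (hI : IsIndep w I)
    (hw'1 : ∀ u v, u ≠ v → u ∉ I → v ∉ I →
      w' u v = min (w u v) (⨅ x ∈ I, w u x + w x v))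
    {v : V} (hv : v ∉ I) :
    ∀ (p : List V) {u : V}, IsWalk w u v p → u ∉ I → wdist w' u v ≤ pathLen w p
  | [], _, hp, _ => absurd rfl hp.1
  | [_], _, hp, _ => by
    obtain ⟨rfl, rfl⟩ := isWalk_singleton.1 hp
    simp
  | [_, _], u, hp, hu => by
    obtain ⟨rfl, -, hbv⟩ := isWalk_cons_cons.1 hp
    obtain ⟨-, rfl⟩ := isWalk_singleton.1 hbv
    simpa using (wdist_augment_le_min hw'1 hu hv).trans (min_le_left _ _)
  | _ :: b :: c :: l, u, hp, hu => by
    obtain ⟨rfl, -, hbc⟩ := isWalk_cons_cons.1 hp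
    by_cases hb : b ∈ I
    · obtain ⟨-, hbc', hcl⟩ := isWalk_cons_cons.1 hbc
      have hc : c ∉ I := fun hc => hI b hb c hc hbc'
      calc wdist w' u v ≤ wdist w' u c + wdist w' c v := wdist_triangle u c v
        _ ≤ (w u b + w b c) + pathLen w (c :: l) :=
          add_le_add ((wdist_augment_le_min hw'1 hu hc).trans
            ((min_le_right _ _).trans (iInf₂_le b hb)))
            (wdist_augment_le_pathLen hI hw'1 hv (c :: l) hcl hc)
        _ = pathLen w (u :: b :: c :: l) := by simp [add_assoc]
    · calc wdist w' u v ≤ wdist w' u b + wdist w' b v := wdist_triangle u b v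
        _ ≤ w u b + pathLen w (b :: c :: l) :=
          add_le_add ((wdist_augment_le_min hw'1 hu hb).trans (min_le_left _ _))
            (wdist_augment_le_pathLen hI hw'1 hv (b :: c :: l) hbc hb)
        _ = pathLen w (u :: b :: c :: l) := (pathLen_cons_cons _ _ _ _).symm
termination_by p => p.length

end Augmentation

theorem augment_preserves_dist_general (w : V → V → ℕ∞)
    (I : Set V) (hI : IsIndep w I) (w' : V → V → ℕ∞)
    (hw'1 : ∀ u v, u ≠ v → u ∉ I → v ∉ I →
      w' u v = min (w u v) (⨅ x ∈ I, w u x + w x v))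
    (hw'2 : ∀ u v, u ∈ I ∨ v ∈ I → w' u v = ⊤) :
    ∀ u v, u ∉ I → v ∉ I → wdist w' u v = wdist w u v := by
  intro u v hu hv
  refine le_antisymm ?_ ?_
  · exact le_iInf fun p => wdist_augment_le_pathLen hI hw'1 hv p.1 p.2 hu
  · exact wdist_le_wdist_of_forall_adj (fun a b hab => wdist_le_augment_of_adj hw'1 hw'2 hab) u v

/-- removing an independent set and adding augmenting edges
preserves distances among the remaining vertices. -/
theorem augment_preserves_dist [Fintype V] (w : V → V → ℕ∞) (hw : IsWGraph w)
    (I : Set V) (hI : IsIndep w I) (w' : V → V → ℕ∞)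
    (hw'1 : ∀ u v, u ≠ v → u ∉ I → v ∉ I →
      w' u v = min (w u v) (⨅ x ∈ I, w u x + w x v))
    (hw'2 : ∀ u v, u ∈ I ∨ v ∈ I → w' u v = ⊤) :
    ∀ u v, u ∉ I → v ∉ I → wdist w' u v = wdist w u v :=
  augment_preserves_dist_general w I hI w' hw'1 hw'2

end ISLabel
end

section
/- Let (L₁, …, L_h; w₁, …, w_h) be a vertex hierarchy of height h on the weighted graph G = (V, w₁). Let s, t ∈ V with dist_G(s,t) < ⊤, and let p be a shortest walk from s to t, i.e. a walk from s to t in w₁ whose length equals dist_G(s,t). Then there is exactly one vertex appearing on p whose level is maximal among the levels of the vertices appearing on p; that is, the set { v : v appears on p and ℓ(v) ≥ ℓ(u) for every u appearing on p } is a singleton. -/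
namespace ISLabel

variable {V : Type*}

/-- `VsetOf L i` is the vertex set `V_i = V ∖ (L₁ ∪ … ∪ L_{i-1})`. -/
def VsetOf (L : ℕ → Set V) (i : ℕ) : Set V := {v | ∀ j, 1 ≤ j → j < i → v ∉ L j}

/-- A vertex hierarchy of height `h ≥ 1` on the weighted graph `w 1`:
pairwise disjoint independent levels `L 1, …, L h` covering `V`, and graphs
`w i` supported on `V_i` obtained by the augmenting-edge construction. -/
structure VertexHierarchy (V : Type*) (h : ℕ) where
  L : ℕ → Set V
  w : ℕ → V → V → ℕ∞
  h_pos : 1 ≤ h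
  wgraph : ∀ i, 1 ≤ i → i ≤ h → IsWGraph (w i)
  disj : ∀ i j, 1 ≤ i → i ≤ h → 1 ≤ j → j ≤ h → i ≠ j → ∀ v, v ∈ L i → v ∉ L j
  cover : ∀ v : V, ∃ i, 1 ≤ i ∧ i ≤ h ∧ v ∈ L i
  supported : ∀ i, 1 ≤ i → i ≤ h → SupportedOn (w i) (VsetOf L i)
  aug : ∀ i, 2 ≤ i → i ≤ h → ∀ u v : V, u ≠ v → u ∈ VsetOf L i → v ∈ VsetOf L i →
    w i u v = min (w (i - 1) u v) (⨅ x ∈ L (i - 1), w (i - 1) u x + w (i - 1) x v)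
  indep : ∀ i, 1 ≤ i → i ≤ h → IsIndep (w i) (L i)

/-- The level `ℓ(v)`: the unique `i` with `1 ≤ i ≤ h` and `v ∈ L i`. -/
noncomputable def level {h : ℕ} (H : VertexHierarchy V h) (v : V) : ℕ :=
  sInf {i | 1 ≤ i ∧ i ≤ h ∧ v ∈ H.L i}

/-!
Call `u, v` level-adjacent if they are equal or adjacent in `G_k` with `k = min(ℓ(u), ℓ(v))`,
the last graph of the hierarchy containing both; every edge of `G` is level-adjacent. In a
level-adjacent sequence of vertices of level `≥ j`, a vertex `x ∈ L_j` can be deleted: since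
`L_j` is independent in `G_j`, its neighbours `u, v` in the sequence are `x` itself or have
level `> j`, and then `u = v` or the augmenting edge through `x` makes `u, v` adjacent in
`G_{j+1}`. Deleting levels `1, …, i - 1` from a walk of maximal level `i` thus leaves a
level-adjacent sequence inside `L_i`, which by independence of `L_i` in `G_i` is constant.
-/

theorem _root_.List.IsChain.filter_of_rel_trans {α : Type*} {R : α → α → Prop} {P : α → Bool}
    (H : ∀ a x b, ¬ P x → R a x → R x b → R a b) {l : List α} (hl : l.IsChain R) :
    (l.filter P).IsChain R := by
  have hcons : ∀ (l : List α) (a : α), (a :: l).IsChain R → (a :: l.filter P).IsChain R := by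
    intro l
    induction l with
    | nil => simp
    | cons x l ih =>
      intro a hc
      rw [List.isChain_cons_cons] at hc
      by_cases hx : P x
      · rw [List.filter_cons_of_pos hx, List.isChain_cons_cons]
        exact ⟨hc.1, ih x hc.2⟩
      · rw [List.filter_cons_of_neg hx]
        refine ih a ?_
        cases l with
        | nil => exact List.isChain_singleton a
        | cons y l =>
          rw [List.isChain_cons_cons] at hc ⊢
          exact ⟨H a x y hx hc.1 hc.2.1, hc.2.2⟩
  induction l with
  | nil => simp
  | cons a l ih =>
    by_cases ha : P a
    · rw [List.filter_cons_of_pos ha]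
      exact hcons l a hl
    · rw [List.filter_cons_of_neg ha]
      exact ih hl.tail

theorem _root_.List.IsChain.filter_of_rel_trans_of_mem {α : Type*} {R : α → α → Prop}
    {P : α → Bool} {l : List α} (hl : l.IsChain R)
    (H : ∀ a ∈ l, ∀ x ∈ l, ∀ b ∈ l, ¬ P x → R a x → R x b → R a b) :
    (l.filter P).IsChain R := by
  have hl' : l.IsChain fun a b => a ∈ l ∧ b ∈ l ∧ R a b :=
    hl.imp_of_mem_imp fun a b ha hb hab => ⟨ha, hb, hab⟩
  refine (List.IsChain.filter_of_rel_trans ?_ hl').imp fun _ _ h => h.2.2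
  rintro a x b hx ⟨ha, hx', hax⟩ ⟨-, hb, hxb⟩
  exact ⟨ha, hb, H a ha x hx' b hb hx hax hxb⟩

section

variable {h : ℕ} (H : VertexHierarchy V h)

lemma one_le_level (v : V) : 1 ≤ level H v := (Nat.sInf_mem (H.cover v)).1

lemma level_le_height (v : V) : level H v ≤ h := (Nat.sInf_mem (H.cover v)).2.1

lemma mem_L_level (v : V) : v ∈ H.L (level H v) := (Nat.sInf_mem (H.cover v)).2.2

lemma mem_vsetOf_of_le_level {v : V} {k : ℕ} (hk : k ≤ level H v) : v ∈ VsetOf H.L k := by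
  intro j hj hjk hv
  have : level H v ≤ j := Nat.sInf_le ⟨hj, (hjk.trans_le hk).le.trans (level_le_height H v), hv⟩
  omega

lemma w_succ_eq {j : ℕ} (hj : 1 ≤ j) {u v : V} (huv : u ≠ v) (hu : j + 1 ≤ level H u)
    (hv : j + 1 ≤ level H v) :
    H.w (j + 1) u v = min (H.w j u v) (⨅ x ∈ H.L j, H.w j u x + H.w j x v) :=
  H.aug (j + 1) (by omega) (hu.trans (level_le_height H u)) u v huv
    (mem_vsetOf_of_le_level H hu) (mem_vsetOf_of_le_level H hv)

lemma adj_succ_of_adj {j : ℕ} (hj : 1 ≤ j) {u v : V} (hu : j + 1 ≤ level H u)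
    (hv : j + 1 ≤ level H v) (huv : Adj (H.w j) u v) : Adj (H.w (j + 1)) u v := by
  refine ⟨huv.1, lt_of_le_of_lt ?_ huv.2⟩
  rw [w_succ_eq H hj huv.1 hu hv]
  exact min_le_left _ _

lemma adj_succ_of_adj_of_adj {j : ℕ} (hj : 1 ≤ j) {u x v : V} (hx : x ∈ H.L j) (huv : u ≠ v)
    (hu : j + 1 ≤ level H u) (hv : j + 1 ≤ level H v)
    (hux : Adj (H.w j) u x) (hxv : Adj (H.w j) x v) : Adj (H.w (j + 1)) u v := by
  refine ⟨huv, lt_of_le_of_lt ?_ (WithTop.add_lt_top.2 ⟨hux.2, hxv.2⟩)⟩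
  rw [w_succ_eq H hj huv hu hv]
  exact (min_le_right _ _).trans (iInf₂_le x hx)

lemma adj_of_adj_of_le {j k : ℕ} (hj : 1 ≤ j) (hjk : j ≤ k) {u v : V} (hu : k ≤ level H u)
    (hv : k ≤ level H v) (huv : Adj (H.w j) u v) : Adj (H.w k) u v := by
  induction k, hjk using Nat.le_induction with
  | base => exact huv
  | succ k hjk ih =>
    exact adj_succ_of_adj H (hj.trans hjk) hu hv (ih (by omega) (by omega))

def LevelAdj (u v : V) : Prop := u = v ∨ Adj (H.w (min (level H u) (level H v))) u v

lemma levelAdj_of_adj_one {u v : V} (huv : Adj (H.w 1) u v) : LevelAdj H u v :=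
  Or.inr <| adj_of_adj_of_le H le_rfl (le_min (one_le_level H u) (one_le_level H v))
    (min_le_left _ _) (min_le_right _ _) huv

lemma LevelAdj.eq_of_level_eq {u v : V} (huv : LevelAdj H u v) (hl : level H u = level H v) :
    u = v := by
  refine huv.resolve_right fun hadj => ?_
  rw [← hl, min_self] at hadj
  exact H.indep _ (one_le_level H u) (level_le_height H u) u (mem_L_level H u) v
    (hl ▸ mem_L_level H v) hadj

lemma LevelAdj.trans_of_level_eq {j : ℕ} {a x b : V} (hx : level H x = j)
    (ha : j ≤ level H a) (hb : j ≤ level H b) (hax : LevelAdj H a x) (hxb : LevelAdj H x b) :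
    LevelAdj H a b := by
  rcases eq_or_ne a x with rfl | hax'
  · exact hxb
  rcases eq_or_ne x b with rfl | hxb'
  · exact hax
  have ha' : j + 1 ≤ level H a := by
    by_contra! hlt
    exact hax' (hax.eq_of_level_eq H (by omega))
  have hb' : j + 1 ≤ level H b := by
    by_contra! hlt
    exact hxb' (hxb.eq_of_level_eq H (by omega))
  rcases eq_or_ne a b with rfl | hab
  · exact Or.inl rfl
  rw [LevelAdj, min_eq_right (by omega), hx] at hax
  rw [LevelAdj, min_eq_left (by omega), hx] at hxb
  refine Or.inr (adj_of_adj_of_le H (by omega) (le_min ha' hb') (min_le_left _ _)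
    (min_le_right _ _) ?_)
  exact adj_succ_of_adj_of_adj H (hx ▸ one_le_level H x) (hx ▸ mem_L_level H x) hab ha' hb'
    (hax.resolve_left hax') (hxb.resolve_left hxb')

lemma isChain_filter_le_level {l : List V} (hl : l.IsChain (LevelAdj H)) (k : ℕ) :
    (l.filter fun v => k ≤ level H v).IsChain (LevelAdj H) := by
  induction k with
  | zero => simpa using hl
  | succ j ih =>
    have hfilter : (l.filter fun v => j + 1 ≤ level H v) =
        (l.filter fun v => j ≤ level H v).filter fun v => j + 1 ≤ level H v := by
      rw [List.filter_filter]
      exact List.filter_congr fun v _ => by grind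
    rw [hfilter]
    refine ih.filter_of_rel_trans_of_mem fun a ha x hx b hb hxj => ?_
    simp only [List.mem_filter, decide_eq_true_eq] at ha hx hb hxj
    exact LevelAdj.trans_of_level_eq H (by omega) ha.2 hb.2

lemma eq_of_mem_of_level_eq_max {p : List V} (hp : p.IsChain (Adj (H.w 1))) {a b : V}
    (ha : a ∈ p) (hb : b ∈ p) (hmax : ∀ u ∈ p, level H u ≤ level H a)
    (hba : level H b = level H a) : b = a := by
  set top := p.filter fun v => level H a ≤ level H v
  have htop : ∀ v ∈ top, level H v = level H a := by
    intro v hv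
    simp only [top, List.mem_filter, decide_eq_true_eq] at hv
    exact le_antisymm (hmax v hv.1) hv.2
  have hchain : top.IsChain (· = ·) :=
    (isChain_filter_le_level H (hp.imp fun _ _ => levelAdj_of_adj_one H) _).imp_of_mem_imp
      fun u v hu hv huv => huv.eq_of_level_eq H ((htop u hu).trans (htop v hv).symm)
  have mem_top : ∀ v ∈ p, level H v = level H a → v ∈ top := by
    intro v hv hva
    simp [top, hv, hva]
  by_contra hne
  exact hne ((List.isChain_iff_pairwise.mp hchain).forall (mem_top b hb hba)
    (mem_top a ha rfl) hne)

end

theorem maxLevel_vertex_unique_general {h : ℕ} (H : VertexHierarchy V h)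
    (s t : V) (p : List V)
    (hp : IsWalk (H.w 1) s t p) :
    ∃! m : V, m ∈ p ∧ ∀ u ∈ p, level H u ≤ level H m := by
  obtain ⟨hne, -, -, hchain⟩ := hp
  obtain ⟨m, hm, hmax⟩ := Set.exists_max_image {v | v ∈ p} (level H) p.finite_toSet
    (List.exists_mem_of_ne_nil p hne)
  refine ⟨m, ⟨hm, hmax⟩, fun m' ⟨hm', hmax'⟩ => ?_⟩
  exact eq_of_mem_of_level_eq_max H hchain hm hm' hmax (le_antisymm (hmax m' hm') (hmax' m hm))

/-- a shortest walk has a unique max-level vertex. -/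
theorem maxLevel_vertex_unique [Fintype V] {h : ℕ} (H : VertexHierarchy V h)
    (s t : V) (hst : wdist (H.w 1) s t < ⊤) (p : List V)
    (hp : IsWalk (H.w 1) s t p) (hlen : pathLen (H.w 1) p = wdist (H.w 1) s t) :
    ∃! m : V, m ∈ p ∧ ∀ u ∈ p, level H u ≤ level H m :=
  maxLevel_vertex_unique_general H s t p hp

end ISLabel
end

section
/- Let (L₁, …, L_{k−1}, V_{G_k}; w₁, …, w_k) be a k-level vertex hierarchy on the weighted graph G = (V, w₁), and let s, t ∈ V be such that Anc(s) ∩ V_{G_k} = ∅ or Anc(t) ∩ V_{G_k} = ∅. Then no shortest walk from s to t contains a vertex of V_{G_k}; that is, every walk p from s to t in w₁ whose length equals dist_G(s,t) contains no vertex of V_{G_k}. -/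
namespace ISLabel

variable {V : Type*}

/-- A `k`-level vertex hierarchy (`k ≥ 2`) on the weighted graph `w 1`: like a
vertex hierarchy of height `k`, except that the top vertex set
`V_{G_k} = VsetOf L k` is not required to be independent in `w k`. -/
structure KLevelHierarchy (V : Type*) (k : ℕ) where
  L : ℕ → Set V
  w : ℕ → V → V → ℕ∞
  two_le : 2 ≤ k
  wgraph : ∀ i, 1 ≤ i → i ≤ k → IsWGraph (w i)
  disj : ∀ i j, 1 ≤ i → i < k → 1 ≤ j → j < k → i ≠ j → ∀ v, v ∈ L i → v ∉ L j
  supported : ∀ i, 1 ≤ i → i ≤ k → SupportedOn (w i) (VsetOf L i)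
  aug : ∀ i, 2 ≤ i → i ≤ k → ∀ u v : V, u ≠ v → u ∈ VsetOf L i → v ∈ VsetOf L i →
    w i u v = min (w (i - 1) u v) (⨅ x ∈ L (i - 1), w (i - 1) u x + w (i - 1) x v)
  indep : ∀ i, 1 ≤ i → i < k → IsIndep (w i) (L i)

/-- The level of a vertex: the unique `i < k` with `v ∈ L i`, and `k` for vertices
of the top vertex set `V_{G_k}`. -/
noncomputable def klevel {k : ℕ} (H : KLevelHierarchy V k) (v : V) : ℕ :=
  sInf {i | (1 ≤ i ∧ i < k ∧ v ∈ H.L i) ∨ i = k}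

/-- One step of an ascending sequence in a `k`-level vertex hierarchy. -/
def kAscStep {k : ℕ} (H : KLevelHierarchy V k) (a b : V) : Prop :=
  klevel H a < klevel H b ∧ Adj (H.w (klevel H a)) a b

/-- `p` is an ascending sequence from `v` to `u`. -/
def kIsAscending {k : ℕ} (H : KLevelHierarchy V k) (v u : V) (p : List V) : Prop :=
  p ≠ [] ∧ p.head? = some v ∧ p.getLast? = some u ∧ p.Chain' (kAscStep H)

/-- The set of ancestors of `v`. -/
def kAnc {k : ℕ} (H : KLevelHierarchy V k) (v : V) : Set V :=
  {u | ∃ p, kIsAscending H v u p}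

/-- `d(v,u)` in a `k`-level vertex hierarchy. -/
noncomputable def kAncDist {k : ℕ} (H : KLevelHierarchy V k) (v u : V) : ℕ∞ :=
  ⨅ p : {p : List V // kIsAscending H v u p},
    pathLen (fun a b => H.w (klevel H a) a b) p.1

/-!
If a walk of `G` joins `s` to a vertex `x ∈ V_{G_k}`, climb the hierarchy while keeping a
vertex `sᵢ ∈ V_i`, reached from `s` by an ascending sequence and joined to `x` in `G_i`. If
`sᵢ ∈ L_i`, the next vertex of its walk lies outside the independent set `L_i`, hence one
ascending step higher. A walk of `G_i` between vertices of `V_{i+1}` becomes a walk of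
`G_{i+1}`, each detour through `L_i` being replaced by an augmenting edge. At level `k` this
yields an ancestor of `s` in `V_{G_k}`; for `t`, use the symmetry of `G`.
-/

lemma mem_VsetOf_one (L : ℕ → Set V) (v : V) : v ∈ VsetOf L 1 :=
  fun _ h1 h2 => absurd (h2.trans_le h1) (lt_irrefl _)

lemma VsetOf_antitone (L : ℕ → Set V) : Antitone (VsetOf L) :=
  fun _ _ hij _ hv m h1 h2 => hv m h1 (h2.trans_le hij)

lemma mem_VsetOf_succ {L : ℕ → Set V} {v : V} {i : ℕ} (hv : v ∈ VsetOf L i) (hL : v ∉ L i) :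
    v ∈ VsetOf L (i + 1) := by
  intro j hj1 hj2
  rcases Nat.lt_succ_iff_lt_or_eq.1 hj2 with h | rfl
  · exact hv j hj1 h
  · exact hL

lemma Adj.symm {w : V → V → ℕ∞} (hw : ∀ a b, w a b = w b a) {u v : V} (h : Adj w u v) :
    Adj w v u :=
  ⟨h.1.symm, hw u v ▸ h.2⟩

lemma reflTransGen_adj_symm {w : V → V → ℕ∞} (hw : ∀ a b, w a b = w b a) {u v : V}
    (h : Relation.ReflTransGen (Adj w) u v) : Relation.ReflTransGen (Adj w) v u :=
  have : Std.Symm (Adj w) := ⟨fun _ _ h => h.symm hw⟩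
  Std.Symm.symm _ _ h

lemma reflTransGen_of_mem_walk {w : V → V → ℕ∞} {u v x : V} {p : List V}
    (hp : IsWalk w u v p) (hx : x ∈ p) : Relation.ReflTransGen (Adj w) u x := by
  obtain ⟨hne, hhead, -, hchain⟩ := hp
  obtain rfl : p.head hne = u := by simpa [List.head?_eq_some_head hne] using hhead
  exact List.IsChain.induction (Relation.ReflTransGen (Adj w) (p.head hne) ·) p hchain
    (fun _ _ hxy hx => hx.tail hxy) (fun _ => .refl) x hx

namespace KLevelHierarchy

variable {k : ℕ} (H : KLevelHierarchy V k)

lemma klevel_eq_of_mem {i : ℕ} {v : V} (h1 : 1 ≤ i) (hik : i < k) (hL : v ∈ H.L i)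
    (hV : v ∈ VsetOf H.L i) : klevel H v = i := by
  refine le_antisymm (Nat.sInf_le (Or.inl ⟨h1, hik, hL⟩)) (le_csInf ⟨k, Or.inr rfl⟩ ?_)
  rintro j (⟨hj1, -, hjL⟩ | rfl)
  · exact not_lt.1 fun hji => hV j hj1 hji hjL
  · exact hik.le

lemma le_klevel_of_mem {i : ℕ} {v : V} (hik : i ≤ k) (hV : v ∈ VsetOf H.L i) :
    i ≤ klevel H v := by
  refine le_csInf ⟨k, Or.inr rfl⟩ ?_
  rintro j (⟨hj1, -, hjL⟩ | rfl)
  · exact not_lt.1 fun hji => hV j hj1 hji hjL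
  · exact hik

lemma mem_VsetOf_of_adj {i : ℕ} (h1 : 1 ≤ i) (hik : i ≤ k) {u v : V} (h : Adj (H.w i) u v) :
    u ∈ VsetOf H.L i ∧ v ∈ VsetOf H.L i := by
  by_contra hc
  exact h.2.ne (H.supported i h1 hik u v (not_and_or.1 hc))

lemma w_succ_le {i : ℕ} (h1 : 1 ≤ i) (hik : i + 1 ≤ k) {u v : V} (huv : u ≠ v)
    (hu : u ∈ VsetOf H.L (i + 1)) (hv : v ∈ VsetOf H.L (i + 1)) :
    H.w (i + 1) u v ≤ min (H.w i u v) (⨅ x ∈ H.L i, H.w i u x + H.w i x v) :=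
  (H.aug (i + 1) (by omega) hik u v huv hu hv).le

lemma adj_succ_of_adj {i : ℕ} (h1 : 1 ≤ i) (hik : i + 1 ≤ k) {u v : V}
    (hu : u ∈ VsetOf H.L (i + 1)) (hv : v ∈ VsetOf H.L (i + 1)) (h : Adj (H.w i) u v) :
    Adj (H.w (i + 1)) u v :=
  ⟨h.1, ((H.w_succ_le h1 hik h.1 hu hv).trans (min_le_left _ _)).trans_lt h.2⟩

lemma adj_succ_of_adj_of_adj {i : ℕ} (h1 : 1 ≤ i) (hik : i + 1 ≤ k) {u x v : V} (huv : u ≠ v)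
    (hu : u ∈ VsetOf H.L (i + 1)) (hv : v ∈ VsetOf H.L (i + 1)) (hx : x ∈ H.L i)
    (hux : Adj (H.w i) u x) (hxv : Adj (H.w i) x v) : Adj (H.w (i + 1)) u v := by
  refine ⟨huv, lt_of_le_of_lt ?_ (WithTop.add_lt_top.2 ⟨hux.2, hxv.2⟩)⟩
  exact (H.w_succ_le h1 hik huv hu hv).trans ((min_le_right _ _).trans (iInf₂_le x hx))

/-- Since `L i` is independent in `G_i`, a walk of `G_i` visits `L i` only in steps `e, x, c`
with `e, c ∈ V_{i+1}`, and the augmenting edge `e c` of `G_{i+1}` shortcuts them. -/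
lemma reflTransGen_adj_succ_aux {i : ℕ} (h1 : 1 ≤ i) (hik : i + 1 ≤ k) {a b : V}
    (hb : b ∈ VsetOf H.L (i + 1)) (h : Relation.ReflTransGen (Adj (H.w i)) a b) :
    (a ∈ VsetOf H.L (i + 1) → Relation.ReflTransGen (Adj (H.w (i + 1))) a b) ∧
      (a ∈ H.L i → ∀ e ∈ VsetOf H.L (i + 1), Adj (H.w i) e a →
        Relation.ReflTransGen (Adj (H.w (i + 1))) e b) := by
  induction h using Relation.ReflTransGen.head_induction_on with
  | refl => exact ⟨fun _ => .refl, fun hbL _ _ _ => absurd hbL (hb i h1 (by omega))⟩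
  | @head a c hac _ ih =>
    have hcV : c ∈ VsetOf H.L i := (H.mem_VsetOf_of_adj h1 (by omega) hac).2
    constructor
    · intro haV
      by_cases hcL : c ∈ H.L i
      · exact ih.2 hcL a haV hac
      · have hcV' := mem_VsetOf_succ hcV hcL
        exact (ih.1 hcV').head (H.adj_succ_of_adj h1 hik haV hcV' hac)
    · intro haL e heV hea
      have hcL : c ∉ H.L i := fun hcL => H.indep i h1 (by omega) a haL c hcL hac
      have hcV' := mem_VsetOf_succ hcV hcL
      by_cases hec : e = c
      · exact hec ▸ ih.1 hcV'
      · exact (ih.1 hcV').head (H.adj_succ_of_adj_of_adj h1 hik hec heV hcV' haL hea hac)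

lemma reflTransGen_adj_succ {i : ℕ} (h1 : 1 ≤ i) (hik : i + 1 ≤ k) {a b : V}
    (ha : a ∈ VsetOf H.L (i + 1)) (hb : b ∈ VsetOf H.L (i + 1))
    (h : Relation.ReflTransGen (Adj (H.w i)) a b) :
    Relation.ReflTransGen (Adj (H.w (i + 1))) a b :=
  (H.reflTransGen_adj_succ_aux h1 hik hb h).1 ha

lemma kAscStep_of_adj {i : ℕ} (h1 : 1 ≤ i) (hik : i + 1 ≤ k) {a b : V} (haL : a ∈ H.L i)
    (haV : a ∈ VsetOf H.L i) (hbV : b ∈ VsetOf H.L (i + 1)) (h : Adj (H.w i) a b) :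
    kAscStep H a b := by
  rw [kAscStep, H.klevel_eq_of_mem h1 (by omega) haL haV]
  exact ⟨Nat.lt_of_succ_le (H.le_klevel_of_mem hik hbV), h⟩

lemma mem_kAnc_of_reflTransGen {s u : V} (h : Relation.ReflTransGen (kAscStep H) s u) :
    u ∈ kAnc H s := by
  obtain ⟨l, hchain, hlast⟩ := List.exists_isChain_cons_of_relationReflTransGen h
  have hne := List.cons_ne_nil s l
  exact ⟨s :: l, hne, rfl, by rw [List.getLast?_eq_some_getLast hne, hlast], hchain⟩

lemma exists_kAscStep_reflTransGen_succ {i : ℕ} (h1 : 1 ≤ i) (hik : i + 1 ≤ k) {s x : V}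
    (hx : x ∈ VsetOf H.L (i + 1)) (hs : s ∈ VsetOf H.L i)
    (h : Relation.ReflTransGen (Adj (H.w i)) s x) :
    ∃ s', Relation.ReflTransGen (kAscStep H) s s' ∧ s' ∈ VsetOf H.L (i + 1) ∧
      Relation.ReflTransGen (Adj (H.w (i + 1))) s' x := by
  by_cases hsL : s ∈ H.L i
  · rcases h.cases_head with rfl | ⟨y, hsy, hyx⟩
    · exact absurd hsL (hx i h1 (by omega))
    · have hyL : y ∉ H.L i := fun hyL => H.indep i h1 (by omega) s hsL y hyL hsy
      have hyV := mem_VsetOf_succ (H.mem_VsetOf_of_adj h1 (by omega) hsy).2 hyL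
      exact ⟨y, .single (H.kAscStep_of_adj h1 hik hsL hs hyV hsy), hyV,
        H.reflTransGen_adj_succ h1 hik hyV hx hyx⟩
  · have hsV := mem_VsetOf_succ hs hsL
    exact ⟨s, .refl, hsV, H.reflTransGen_adj_succ h1 hik hsV hx h⟩

lemma exists_kAscStep_reflTransGen {x s : V} (hx : x ∈ VsetOf H.L k)
    (h : Relation.ReflTransGen (Adj (H.w 1)) s x) {i : ℕ} (h1 : 1 ≤ i) (hik : i ≤ k) :
    ∃ s', Relation.ReflTransGen (kAscStep H) s s' ∧ s' ∈ VsetOf H.L i ∧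
      Relation.ReflTransGen (Adj (H.w i)) s' x := by
  induction i, h1 using Nat.le_induction with
  | base => exact ⟨s, .refl, mem_VsetOf_one _ s, h⟩
  | succ i h1 ih =>
    obtain ⟨s', hss', hs'V, hs'x⟩ := ih (by omega)
    obtain ⟨s'', hs's'', hs''⟩ :=
      H.exists_kAscStep_reflTransGen_succ h1 hik (VsetOf_antitone _ hik hx) hs'V hs'x
    exact ⟨s'', hss'.trans hs's'', hs''⟩

lemma kAnc_inter_top_nonempty {s x : V} (hx : x ∈ VsetOf H.L k)
    (h : Relation.ReflTransGen (Adj (H.w 1)) s x) : (kAnc H s ∩ VsetOf H.L k).Nonempty := by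
  obtain ⟨s', hss', hs'V, -⟩ :=
    H.exists_kAscStep_reflTransGen hx h (by have := H.two_le; omega) le_rfl
  exact ⟨s', H.mem_kAnc_of_reflTransGen hss', hs'V⟩

end KLevelHierarchy

theorem klevel_shortest_avoids_top_general {k : ℕ} (H : KLevelHierarchy V k)
    (s t : V)
    (hdisj : kAnc H s ∩ VsetOf H.L k = ∅ ∨ kAnc H t ∩ VsetOf H.L k = ∅) :
    ∀ p : List V, IsWalk (H.w 1) s t p → pathLen (H.w 1) p = wdist (H.w 1) s t →
      ∀ v ∈ p, v ∉ VsetOf H.L k := by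
  intro p hp _ v hv hvk
  have hsymm := (H.wgraph 1 le_rfl (by have := H.two_le; omega)).1
  have hsv : Relation.ReflTransGen (Adj (H.w 1)) s v := reflTransGen_of_mem_walk hp hv
  have hst : Relation.ReflTransGen (Adj (H.w 1)) s t :=
    reflTransGen_of_mem_walk hp (List.mem_of_getLast? hp.2.2.1)
  have htv : Relation.ReflTransGen (Adj (H.w 1)) t v :=
    (reflTransGen_adj_symm hsymm hst).trans hsv
  rcases hdisj with hd | hd
  · exact (H.kAnc_inter_top_nonempty hvk hsv).ne_empty hd
  · exact (H.kAnc_inter_top_nonempty hvk htv).ne_empty hd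

/-- for Type-1 queries, no shortest walk meets the top vertex set. -/
theorem klevel_shortest_avoids_top [Fintype V] {k : ℕ} (H : KLevelHierarchy V k)
    (s t : V)
    (hdisj : kAnc H s ∩ VsetOf H.L k = ∅ ∨ kAnc H t ∩ VsetOf H.L k = ∅) :
    ∀ p : List V, IsWalk (H.w 1) s t p → pathLen (H.w 1) p = wdist (H.w 1) s t →
      ∀ v ∈ p, v ∉ VsetOf H.L k :=
  klevel_shortest_avoids_top_general H s t hdisj

end ISLabel
end
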